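/- Let K ⊆ M_ξ Σ and L ⊆ M_ζ Σ be languages over the same alphabet, where K has a syntactic algebra. Then the following are equivalent: (1) ≼_K ⊆ ≼_L; (2) the syntactic morphism syn_K recognises L; (3) every morphism recognising K also recognises L; (4) L is a finite union of finite intersections of derivatives of K, i.e., L = ⋃_{i<m} ⋂_{k<n_i} p_{ik}⁻¹[K] for suitable contexts p_{ik} ∈ M(Σ+□). -/

import Mathlib

/-- An object of `Pos`: a type equipped with a partial order. -/
structure Pos : Type 1 where
  car : Type
  po : PartialOrder car

attribute [instance] Pos.po

/-- Monotone maps between objects of `Pos`. -/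
structure PHom (A B : Pos) where
  f : A.car → B.car
  mono : Monotone f

def PHom.id (A : Pos) : PHom A A := ⟨fun a => a, fun _ _ h => h⟩

def PHom.comp {A B C : Pos} (g : PHom B C) (f : PHom A B) : PHom A C :=
  ⟨fun a => g.f (f.f a), fun _ _ h => g.mono (f.mono h)⟩

/-- A monad on the category `Pos` of partially ordered sets and monotone maps. -/
structure OMonad : Type 1 where
  obj : Pos → Pos
  map : {A B : Pos} → PHom A B → PHom (obj A) (obj B)
  map_id : ∀ A : Pos, map (PHom.id A) = PHom.id (obj A)
  map_comp : ∀ {A B C : Pos} (f : PHom A B) (g : PHom B C),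
      map (g.comp f) = (map g).comp (map f)
  sing : ∀ A : Pos, PHom A (obj A)
  flat : ∀ A : Pos, PHom (obj (obj A)) (obj A)
  sing_nat : ∀ {A B : Pos} (f : PHom A B), (map f).comp (sing A) = (sing B).comp f
  flat_nat : ∀ {A B : Pos} (f : PHom A B),
      (map f).comp (flat A) = (flat B).comp (map (map f))
  flat_sing : ∀ A, (flat A).comp (sing (obj A)) = PHom.id (obj A)
  flat_map_sing : ∀ A, (flat A).comp (map (sing A)) = PHom.id (obj A)
  flat_assoc : ∀ A, (flat A).comp (flat (obj A)) = (flat A).comp (map (flat A))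

/-- An Eilenberg–Moore algebra for the monad `M`. -/
structure OAlg (M : OMonad) where
  A : Pos
  pi : PHom (M.obj A) A
  unit_law : pi.comp (M.sing A) = PHom.id A
  assoc_law : pi.comp (M.map pi) = pi.comp (M.flat A)

/-- A morphism of Eilenberg–Moore algebras. -/
structure OAlgHom {M : OMonad} (X Y : OAlg M) where
  h : PHom X.A Y.A
  comm : h.comp X.pi = Y.pi.comp (M.map h)

def OAlgHom.comp {M : OMonad} {X Y Z : OAlg M} (g : OAlgHom Y Z) (f : OAlgHom X Y) :
    OAlgHom X Z :=
  ⟨g.h.comp f.h, by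
    calc (g.h.comp f.h).comp X.pi = g.h.comp (f.h.comp X.pi) := rfl
      _ = g.h.comp (Y.pi.comp (M.map f.h)) := by rw [f.comm]
      _ = (g.h.comp Y.pi).comp (M.map f.h) := rfl
      _ = (Z.pi.comp (M.map g.h)).comp (M.map f.h) := by rw [g.comm]
      _ = Z.pi.comp ((M.map g.h).comp (M.map f.h)) := rfl
      _ = Z.pi.comp (M.map (g.h.comp f.h)) := by rw [← M.map_comp]⟩

/-- The free `M`-algebra over `A`, carried by `M A` with product `flat`. -/
def OMonad.free (M : OMonad) (A : Pos) : OAlg M :=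
  ⟨M.obj A, M.flat A, M.flat_sing A, (M.flat_assoc A).symm⟩

/- Sub-posets, products, relations as sub-posets of products. -/

def Pos.sub (A : Pos) (S : Set A.car) : Pos := ⟨{a : A.car // a ∈ S}, inferInstance⟩

def subIncl (A : Pos) (S : Set A.car) : PHom (A.sub S) A := ⟨fun a => a.val, fun _ _ h => h⟩

def Pos.prod (A B : Pos) : Pos := ⟨A.car × B.car, inferInstance⟩

def prodFst (A B : Pos) : PHom (A.prod B) A := ⟨Prod.fst, fun _ _ h => h.1⟩
def prodSnd (A B : Pos) : PHom (A.prod B) B := ⟨Prod.snd, fun _ _ h => h.2⟩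

/-- A relation `r` on `A`, as a sub-poset of `A × A`. -/
def relPos (A : Pos) (r : A.car → A.car → Prop) : Pos :=
  ⟨{p : A.car × A.car // r p.1 p.2}, inferInstance⟩

def relFst (A : Pos) (r : A.car → A.car → Prop) : PHom (relPos A r) A :=
  ⟨fun p => p.val.1, fun _ _ h => h.1⟩
def relSnd (A : Pos) (r : A.car → A.car → Prop) : PHom (relPos A r) A :=
  ⟨fun p => p.val.2, fun _ _ h => h.2⟩

/- The standing convention on the monad `M`. -/

def PreservesInj (M : OMonad) : Prop :=
  ∀ {A B : Pos} (f : PHom A B), Function.Injective f.f → Function.Injective (M.map f).f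
def PreservesSurj (M : OMonad) : Prop :=
  ∀ {A B : Pos} (f : PHom A B), Function.Surjective f.f → Function.Surjective (M.map f).f
def PreservesBij (M : OMonad) : Prop :=
  ∀ {A B : Pos} (f : PHom A B), Function.Bijective f.f → Function.Bijective (M.map f).f
def PreservesPre (M : OMonad) : Prop :=
  ∀ {A B : Pos} (f : PHom A B) (S : Set B.car),
    Set.range (M.map (subIncl A (f.f ⁻¹' S))).f
      = (M.map f).f ⁻¹' Set.range (M.map (subIncl B S)).f

/-- `M` uses the standard ordering: the order on `M A` is the lift of the order on `A`. -/
def UsesStdOrder (M : OMonad) : Prop :=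
  ∀ (A : Pos) (s t : (M.obj A).car),
    s ≤ t ↔ ∃ u : (M.obj (relPos A (fun a b => a ≤ b))).car,
      (M.map (relFst A (fun a b => a ≤ b))).f u = s ∧
      (M.map (relSnd A (fun a b => a ≤ b))).f u = t

/-- The standing convention of the paper. -/
def Convention (M : OMonad) : Prop :=
  PreservesInj M ∧ PreservesSurj M ∧ PreservesBij M ∧ PreservesPre M ∧ UsesStdOrder M

/- Quotients by preorders containing the order. -/

/-- A preorder on (the carrier of) `A` containing the partial order of `A`. -/
structure PreCong (A : Pos) where
  r : A.car → A.car → Prop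
  refl : ∀ a, r a a
  trans : ∀ a b c, r a b → r b c → r a c
  le_sub : ∀ a b : A.car, a ≤ b → r a b

def PreCong.setoid {A : Pos} (co : PreCong A) : Setoid A.car where
  r a b := co.r a b ∧ co.r b a
  iseqv := ⟨fun a => ⟨co.refl a, co.refl a⟩, fun h => ⟨h.2, h.1⟩,
    fun h1 h2 => ⟨co.trans _ _ _ h1.1 h2.1, co.trans _ _ _ h2.2 h1.2⟩⟩

/-- The quotient poset `A/⊑`. -/
def quotPos {A : Pos} (co : PreCong A) : Pos where
  car := Quotient co.setoid
  po :=
    { le := Quotient.lift₂ co.r (fun a b a' b' ha hb => propext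
        ⟨fun h => co.trans _ _ _ ha.2 (co.trans _ _ _ h hb.1),
         fun h => co.trans _ _ _ ha.1 (co.trans _ _ _ h hb.2)⟩)
      le_refl := fun q => Quotient.inductionOn q co.refl
      le_trans := by
        intro q1 q2 q3
        refine Quotient.inductionOn₃ q1 q2 q3 ?_
        intro a b d h1 h2
        exact co.trans a b d h1 h2
      le_antisymm := by
        intro q1 q2
        refine Quotient.inductionOn₂ q1 q2 ?_
        intro a b h1 h2
        exact Quotient.sound ⟨h1, h2⟩
      lt := fun q1 q2 => Quotient.lift₂ (s₁ := co.setoid) (s₂ := co.setoid) co.r (fun a b a' b' ha hb => propext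
          ⟨fun h => co.trans _ _ _ ha.2 (co.trans _ _ _ h hb.1),
           fun h => co.trans _ _ _ ha.1 (co.trans _ _ _ h hb.2)⟩) q1 q2 ∧
        ¬ Quotient.lift₂ (s₁ := co.setoid) (s₂ := co.setoid) co.r (fun a b a' b' ha hb => propext
          ⟨fun h => co.trans _ _ _ ha.2 (co.trans _ _ _ h hb.1),
           fun h => co.trans _ _ _ ha.1 (co.trans _ _ _ h hb.2)⟩) q2 q1
      lt_iff_le_not_ge := fun _ _ => Iff.rfl }

/-- The quotient map `A → A/⊑`. -/
def quotHom {A : Pos} (co : PreCong A) : PHom A (quotPos co) :=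
  ⟨fun a => Quotient.mk co.setoid a, fun a b h => co.le_sub a b h⟩

/-- `⊑` is a congruence ordering on the algebra `X`:
`s ⊑_M t` (i.e. `M q (s) ≤ M q (t)`) implies `π(s) ⊑ π(t)`. -/
def IsCongOrdP (M : OMonad) (X : OAlg M) (co : PreCong X.A) : Prop :=
  ∀ s t : (M.obj X.A).car,
    (M.map (quotHom co)).f s ≤ (M.map (quotHom co)).f t → co.r (X.pi.f s) (X.pi.f t)

/-- The relation `r` is a congruence ordering on the algebra `X`. -/
def IsCongruenceOrdering (M : OMonad) (X : OAlg M) (r : X.A.car → X.A.car → Prop) : Prop :=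
  ∃ (h1 : ∀ a, r a a) (h2 : ∀ a b c, r a b → r b c → r a c)
    (h3 : ∀ a b : X.A.car, a ≤ b → r a b),
    IsCongOrdP M X ⟨r, h1, h2, h3⟩

/- Contexts and syntactic congruences. -/

/-- `A + □`: the poset `A` extended by a single extra point `□`. -/
def Pos.addBox (A : Pos) : Pos := ⟨A.car ⊕ PUnit, inferInstance⟩

/-- The map `A + □ → A` substituting `a` for `□`. -/
def substHom (M : OMonad) (X : OAlg M) (a : X.A.car) : PHom X.A.addBox X.A :=
  ⟨fun z => Sum.elim (fun x => x) (fun _ => a) z, by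
    intro x y h
    cases h with
    | inl h => exact h
    | inr h => exact le_refl a⟩

/-- Evaluation `p[a]` of a context `p ∈ M(A + □)` at `a ∈ A`. -/
def ctxEval (M : OMonad) (X : OAlg M) (p : (M.obj X.A.addBox).car) (a : X.A.car) : X.A.car :=
  X.pi.f ((M.map (substHom M X a)).f p)

/-- The syntactic congruence `a ≼_K b` of a set `K`. -/
def synLe (M : OMonad) (X : OAlg M) (K : Set X.A.car) (a b : X.A.car) : Prop :=
  ∀ p : (M.obj X.A.addBox).car, ctxEval M X p a ∈ K → ctxEval M X p b ∈ K

def UpClosed (A : Pos) (K : Set A.car) : Prop :=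
  ∀ a b : A.car, a ∈ K → a ≤ b → b ∈ K

/-- The derivative `p⁻¹[K]` of `K` by the context `p`. -/
def ctxDeriv (M : OMonad) (X : OAlg M) (p : (M.obj X.A.addBox).car) (K : Set X.A.car) :
    Set X.A.car :=
  {a | ctxEval M X p a ∈ K}

/-- `A` carries the trivial (discrete) order. -/
def TrivOrder (A : Pos) : Prop := ∀ a b : A.car, a ≤ b → a = b

/-- A morphism from a free algebra recognises a language `K` if `K` is the preimage of
an upwards closed set. -/
def Recognises {M : OMonad} {Sg : Pos} {X : OAlg M} (φ : OAlgHom (M.free Sg) X)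
    (K : Set ((M.obj Sg).car)) : Prop :=
  ∃ P : Set X.A.car, UpClosed X.A P ∧ K = φ.h.f ⁻¹' P

/-- Embedding of `Σ + □` into `(M Σ) + □` via `sing`, used to view contexts over the
alphabet as contexts over the free algebra. -/
def singBox (M : OMonad) (Sg : Pos) : PHom Sg.addBox (M.obj Sg).addBox :=
  ⟨Sum.map (M.sing Sg).f (fun x => x), by
    intro x y h
    cases h with
    | inl h => exact Sum.LiftRel.inl ((M.sing Sg).mono h)
    | inr h => exact Sum.LiftRel.inr h⟩

/-- Evaluation of a context `p ∈ M(Σ + □)` at an element `s ∈ M Σ` of the free algebra. -/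
def freeCtxEval (M : OMonad) (Sg : Pos) (p : (M.obj Sg.addBox).car) (s : (M.obj Sg).car) :
    (M.obj Sg).car :=
  ctxEval M (M.free Sg) ((M.map (singBox M Sg)).f p) s

/- Finitary monads and algebras. -/

/-- `M` is finitary: it preserves directed unions. -/
def FinitaryM (M : OMonad) : Prop :=
  ∀ (A : Pos) (ι : Type) (D : ι → Set A.car), Directed (· ⊆ ·) D → (⋃ i, D i) = Set.univ →
    ∀ s : (M.obj A).car, ∃ i, ∃ s₀ : (M.obj (A.sub (D i))).car,
      (M.map (subIncl A (D i))).f s₀ = s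

/-- A finitary algebra: (sort-wise) finite universe and finitely generated. -/
def FinitaryAlg (M : OMonad) (X : OAlg M) : Prop :=
  Finite X.A.car ∧ ∃ C : Set X.A.car, C.Finite ∧
    ∀ a : X.A.car, ∃ s : (M.obj (X.A.sub C)).car, a = X.pi.f ((M.map (subIncl X.A C)).f s)
/-- A morphism of monads `M₀ ⇒ M₁`. -/
structure OMonadHom (M₀ M₁ : OMonad) where
  app : ∀ A : Pos, PHom (M₀.obj A) (M₁.obj A)
  naturality : ∀ {A B : Pos} (f : PHom A B),
      (app B).comp (M₀.map f) = (M₁.map f).comp (app A)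
  sing_comm : ∀ A : Pos, (app A).comp (M₀.sing A) = M₁.sing A
  flat_comm : ∀ A : Pos,
      (app A).comp (M₀.flat A)
        = (M₁.flat A).comp ((app (M₁.obj A)).comp (M₀.map (app A)))

/-- The `ρ`-reduct of an `M₁`-algebra: the `M₀`-algebra with product `π ∘ ρ`. -/
def OMonadHom.reduct {M₀ M₁ : OMonad} (ρ : OMonadHom M₀ M₁) (X : OAlg M₁) : OAlg M₀ where
  A := X.A
  pi := X.pi.comp (ρ.app X.A)
  unit_law := by
    calc (X.pi.comp (ρ.app X.A)).comp (M₀.sing X.A)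
        = X.pi.comp ((ρ.app X.A).comp (M₀.sing X.A)) := rfl
      _ = X.pi.comp (M₁.sing X.A) := by rw [ρ.sing_comm]
      _ = PHom.id X.A := X.unit_law
  assoc_law := by
    have hnat := ρ.naturality (X.pi.comp (ρ.app X.A))
    have hint := ρ.naturality (ρ.app X.A)
    calc (X.pi.comp (ρ.app X.A)).comp (M₀.map (X.pi.comp (ρ.app X.A)))
        = X.pi.comp ((ρ.app X.A).comp (M₀.map (X.pi.comp (ρ.app X.A)))) := rfl
      _ = X.pi.comp ((M₁.map (X.pi.comp (ρ.app X.A))).comp (ρ.app (M₀.obj X.A))) := by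
            rw [hnat]
      _ = (X.pi.comp (M₁.map (X.pi.comp (ρ.app X.A)))).comp (ρ.app (M₀.obj X.A)) := rfl
      _ = (X.pi.comp ((M₁.map X.pi).comp (M₁.map (ρ.app X.A)))).comp (ρ.app (M₀.obj X.A)) := by
            rw [M₁.map_comp]
      _ = ((X.pi.comp (M₁.map X.pi)).comp (M₁.map (ρ.app X.A))).comp (ρ.app (M₀.obj X.A)) := rfl
      _ = ((X.pi.comp (M₁.flat X.A)).comp (M₁.map (ρ.app X.A))).comp (ρ.app (M₀.obj X.A)) := by
            rw [X.assoc_law]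
      _ = X.pi.comp ((M₁.flat X.A).comp ((M₁.map (ρ.app X.A)).comp (ρ.app (M₀.obj X.A)))) := rfl
      _ = X.pi.comp ((M₁.flat X.A).comp ((ρ.app (M₁.obj X.A)).comp (M₀.map (ρ.app X.A)))) := by
            rw [hint]
      _ = X.pi.comp ((ρ.app X.A).comp (M₀.flat X.A)) := by rw [← ρ.flat_comm]
      _ = (X.pi.comp (ρ.app X.A)).comp (M₀.flat X.A) := rfl

/-- `ρ : M₀ ⇒ M₁` is dense over the class `C`. -/
def DenseOver {M₀ M₁ : OMonad} (ρ : OMonadHom M₀ M₁) (C : Set (OAlg M₁)) : Prop :=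
  ∀ X ∈ C, ∀ (S : Set X.A.car) (s : (M₁.obj (X.A.sub S)).car),
    ∃ s₀ : (M₀.obj (X.A.sub S)).car,
      X.pi.f ((ρ.app X.A).f ((M₀.map (subIncl X.A S)).f s₀))
        = X.pi.f ((M₁.map (subIncl X.A S)).f s)

/-- `P` is a binary product of `A` and `B` in the category of `M`-algebras
(concretely: the projections induce an order isomorphism with the product poset). -/
def IsBinProd (M : OMonad) (P A B : OAlg M) : Prop :=
  ∃ (pa : OAlgHom P A) (pb : OAlgHom P B),
    Function.Bijective (fun x => (pa.h.f x, pb.h.f x)) ∧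
    ∀ x y : P.A.car, x ≤ y ↔ (pa.h.f x ≤ pa.h.f y ∧ pb.h.f x ≤ pb.h.f y)

/-- Closure of a class of algebras under binary products. -/
inductive InProdClosure (M : OMonad) (C : Set (OAlg M)) : OAlg M → Prop
  | base : ∀ A ∈ C, InProdClosure M C A
  | prod : ∀ A B P, InProdClosure M C A → InProdClosure M C B →
      IsBinProd M P A B → InProdClosure M C P

/-- `P` is a product of the family `A` of `M`-algebras. -/
def IsProdOf (M : OMonad) (P : OAlg M) {I : Type} (A : I → OAlg M) : Prop :=
  ∃ p : ∀ i, OAlgHom P (A i),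
    Function.Bijective (fun (x : P.A.car) (i : I) => (p i).h.f x) ∧
    ∀ x y : P.A.car, x ≤ y ↔ ∀ i, (p i).h.f x ≤ (p i).h.f y

/-- `B` is a quotient of `A`. -/
def IsQuotientOf (M : OMonad) (B A : OAlg M) : Prop :=
  ∃ φ : OAlgHom A B, Function.Surjective φ.h.f

/-- `B` is a subalgebra of `A` (an order embedding which is a morphism). -/
def IsSubalgebraOf (M : OMonad) (B A : OAlg M) : Prop :=
  ∃ φ : OAlgHom B A, ∀ x y : B.A.car, φ.h.f x ≤ φ.h.f y ↔ x ≤ y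

/-- A pseudo-variety (here with a single sort): a class of finitary algebras closed
under quotients, finitary subalgebras of finite products, and (the single-sorted
instance of) sort-accumulation points. -/
def PseudoVariety (M : OMonad) (V : Set (OAlg M)) : Prop :=
  (∀ X ∈ V, FinitaryAlg M X) ∧
  (∀ A ∈ V, ∀ B, IsQuotientOf M B A → B ∈ V) ∧
  (∀ (n : ℕ) (A : Fin n → OAlg M), (∀ i, A i ∈ V) →
    ∀ P, IsProdOf M P A → ∀ B, FinitaryAlg M B → IsSubalgebraOf M B P → B ∈ V) ∧
  (∀ B, FinitaryAlg M B → (∃ A ∈ V, IsQuotientOf M A B) → B ∈ V)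

/-- The inclusion of a relation, as a sub-poset, into the product poset. -/
def relIncl (A : Pos) (r : A.car → A.car → Prop) : PHom (relPos A r) (A.prod A) :=
  ⟨fun p => p.val, fun _ _ h => h⟩

/-! Contexts compose and the context `□` recovers membership, so `≼_K ⊆ ≼_L` says exactly that
`L` is upwards closed for `≼_K`; since `syn` has kernel `≼_K`, this is recognition of `L` by `syn`.
A morphism recognising `K` only orders elements that are `≼_K`-related, because under the standard
ordering context evaluation is monotone; and `syn` itself recognises `K`. For (4): in the finite
algebra `S` an up-set is the finite union of the principal up-sets `↑x` it contains, and
`syn⁻¹(↑x)` is the intersection, over the finitely many `y` with `x ≰ y`, of a derivative of `K`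
that separates a preimage of `x` from a preimage of `y`. The separating contexts live over the free
algebra `M Σ`, and are flattened by `flat` to contexts over `Σ`. -/

theorem PHom.ext {A B : Pos} {f g : PHom A B} (h : ∀ a, f.f a = g.f a) : f = g := by
  cases f; cases g; congr; funext a; exact h a

@[simp] theorem PHom.comp_f {A B C : Pos} (g : PHom B C) (f : PHom A B) (a : A.car) :
    (g.comp f).f a = g.f (f.f a) := rfl

namespace OMonad

variable (M : OMonad) {A B C : Pos}

theorem map_comp_apply (f : PHom A B) (g : PHom B C) (x : (M.obj A).car) :
    (M.map (g.comp f)).f x = (M.map g).f ((M.map f).f x) := by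
  rw [M.map_comp]; rfl

theorem map_sing_apply (f : PHom A B) (a : A.car) :
    (M.map f).f ((M.sing A).f a) = (M.sing B).f (f.f a) :=
  congrArg (fun h => PHom.f h a) (M.sing_nat f)

theorem map_flat_apply (f : PHom A B) (x : (M.obj (M.obj A)).car) :
    (M.map f).f ((M.flat A).f x) = (M.flat B).f ((M.map (M.map f)).f x) :=
  congrArg (fun h => PHom.f h x) (M.flat_nat f)

theorem flat_map_sing_apply (x : (M.obj A).car) : (M.flat A).f ((M.map (M.sing A)).f x) = x :=
  congrArg (fun h => PHom.f h x) (M.flat_map_sing A)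

end OMonad

theorem OAlg.pi_sing_apply {M : OMonad} (X : OAlg M) (a : X.A.car) :
    X.pi.f ((M.sing X.A).f a) = a :=
  congrArg (fun h => PHom.f h a) X.unit_law

theorem OAlg.pi_flat_apply {M : OMonad} (X : OAlg M) (x : (M.obj (M.obj X.A)).car) :
    X.pi.f ((M.flat X.A).f x) = X.pi.f ((M.map X.pi).f x) :=
  (congrArg (fun h => PHom.f h x) X.assoc_law).symm

theorem OAlgHom.h_pi_apply {M : OMonad} {X Y : OAlg M} (φ : OAlgHom X Y)
    (x : (M.obj X.A).car) : φ.h.f (X.pi.f x) = Y.pi.f ((M.map φ.h).f x) :=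
  congrArg (fun h => PHom.f h x) φ.comm

theorem UsesStdOrder.map_apply_le {M : OMonad} (hM : UsesStdOrder M) {A B : Pos}
    {f g : PHom A B} (hfg : ∀ a, f.f a ≤ g.f a) (x : (M.obj A).car) :
    (M.map f).f x ≤ (M.map g).f x := by
  let both : PHom A (relPos B (· ≤ ·)) :=
    ⟨fun a => ⟨(f.f a, g.f a), hfg a⟩, fun _ _ hle => ⟨f.mono hle, g.mono hle⟩⟩
  refine (hM B _ _).mpr ⟨(M.map both).f x, ?_, ?_⟩
  · rw [← M.map_comp_apply]; rfl
  · rw [← M.map_comp_apply]; rfl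

def Pos.inBox {A : Pos} (a : A.car) : A.addBox.car := Sum.inl a

def Pos.box (A : Pos) : A.addBox.car := Sum.inr PUnit.unit

def Pos.inBoxHom (A : Pos) : PHom A A.addBox := ⟨Pos.inBox, fun _ _ h => Sum.LiftRel.inl h⟩

def PHom.addBox {A B : Pos} (f : PHom A B) : PHom A.addBox B.addBox :=
  ⟨Sum.map f.f fun u => u, by
    rintro x y (h | h)
    · exact Sum.LiftRel.inl (f.mono ‹_›)
    · exact Sum.LiftRel.inr ‹_›⟩

theorem PHom.addBox_ext {A B : Pos} {f g : PHom A.addBox B}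
    (hinBox : ∀ a, f.f (Pos.inBox a) = g.f (Pos.inBox a)) (hbox : f.f A.box = g.f A.box) :
    f = g :=
  PHom.ext (by rintro (a | ⟨⟩); exacts [hinBox a, hbox])

section Contexts

variable {M : OMonad} {X : OAlg M}

@[simp] theorem substHom_inBox (a x : X.A.car) : (substHom M X a).f (Pos.inBox x) = x := rfl

@[simp] theorem substHom_box (a : X.A.car) : (substHom M X a).f X.A.box = a := rfl

def boxCtx (M : OMonad) (A : Pos) : (M.obj A.addBox).car := (M.sing A.addBox).f A.box

theorem ctxEval_boxCtx (a : X.A.car) : ctxEval M X (boxCtx M X.A) a = a := by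
  simp only [ctxEval, boxCtx, M.map_sing_apply, substHom_box, X.pi_sing_apply]

def plugHom (M : OMonad) (A : Pos) (p : (M.obj A.addBox).car) : PHom A.addBox (M.obj A.addBox) :=
  ⟨Sum.elim (fun a => (M.sing A.addBox).f (Pos.inBox a)) (fun _ => p), by
    rintro x y (h | h)
    · exact (M.sing A.addBox).mono (Sum.LiftRel.inl ‹_›)
    · exact le_rfl⟩

@[simp] theorem plugHom_inBox (p : (M.obj X.A.addBox).car) (x : X.A.car) :
    (plugHom M X.A p).f (Pos.inBox x) = (M.sing X.A.addBox).f (Pos.inBox x) := rfl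

def ctxComp (M : OMonad) (A : Pos) (q p : (M.obj A.addBox).car) : (M.obj A.addBox).car :=
  (M.flat A.addBox).f ((M.map (plugHom M A p)).f q)

theorem ctxEval_ctxComp (q p : (M.obj X.A.addBox).car) (a : X.A.car) :
    ctxEval M X (ctxComp M X.A q p) a = ctxEval M X q (ctxEval M X p a) := by
  have hplug : X.pi.comp ((M.map (substHom M X a)).comp (plugHom M X.A p))
      = substHom M X (ctxEval M X p a) :=
    PHom.addBox_ext (fun x => by
      simp only [PHom.comp_f, plugHom_inBox, M.map_sing_apply, substHom_inBox, X.pi_sing_apply]) rfl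
  simp only [ctxEval, ctxComp, M.map_flat_apply, X.pi_flat_apply, ← M.map_comp_apply, hplug]

end Contexts

section SyntacticOrder

variable {M : OMonad} {X : OAlg M} {K L : Set X.A.car} {a b : X.A.car}

theorem mem_of_synLe (h : synLe M X K a b) (ha : a ∈ K) : b ∈ K := by
  simpa only [ctxEval_boxCtx] using h (boxCtx M X.A) (by rwa [ctxEval_boxCtx])

theorem synLe_ctxEval (h : synLe M X K a b) (p : (M.obj X.A.addBox).car) :
    synLe M X K (ctxEval M X p a) (ctxEval M X p b) := by
  intro q hq
  rw [← ctxEval_ctxComp] at hq ⊢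
  exact h _ hq

theorem forall_synLe_imp_synLe_iff :
    (∀ a b, synLe M X K a b → synLe M X L a b) ↔
      ∀ a b, synLe M X K a b → a ∈ L → b ∈ L :=
  ⟨fun h a b hab => mem_of_synLe (h a b hab),
    fun h _ _ hab p => h _ _ (synLe_ctxEval hab p)⟩

end SyntacticOrder

theorem UsesStdOrder.ctxEval_mono {M : OMonad} (hM : UsesStdOrder M) {X : OAlg M}
    (p : (M.obj X.A.addBox).car) : Monotone (ctxEval M X p) := fun a b hab =>
  X.pi.mono (hM.map_apply_le (by rintro (x | ⟨⟩); exacts [le_rfl, hab]) p)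

theorem OAlgHom.map_ctxEval {M : OMonad} {X Y : OAlg M} (φ : OAlgHom X Y)
    (p : (M.obj X.A.addBox).car) (a : X.A.car) :
    φ.h.f (ctxEval M X p a) = ctxEval M Y ((M.map φ.h.addBox).f p) (φ.h.f a) := by
  have hsubst : φ.h.comp (substHom M X a) = (substHom M Y (φ.h.f a)).comp φ.h.addBox :=
    PHom.addBox_ext (fun _ => rfl) rfl
  simp only [ctxEval, φ.h_pi_apply, ← M.map_comp_apply, hsubst]

theorem UsesStdOrder.synLe_of_map_le {M : OMonad} (hM : UsesStdOrder M) {X Y : OAlg M}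
    (φ : OAlgHom X Y) {P : Set Y.A.car} (hP : UpClosed Y.A P) {a b : X.A.car}
    (hab : φ.h.f a ≤ φ.h.f b) : synLe M X (φ.h.f ⁻¹' P) a b := fun p hp => by
  simp only [Set.mem_preimage, φ.map_ctxEval] at hp ⊢
  exact hP _ _ hp (hM.ctxEval_mono _ hab)

theorem recognises_iff {M : OMonad} {Sg : Pos} {X : OAlg M} (φ : OAlgHom (M.free Sg) X)
    (L : Set (M.obj Sg).car) :
    Recognises φ L ↔ ∀ s t, φ.h.f s ≤ φ.h.f t → s ∈ L → t ∈ L := by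
  constructor
  · rintro ⟨P, hP, rfl⟩ s t hst hs
    exact hP _ _ hs hst
  · intro h
    refine ⟨{x | ∃ s ∈ L, φ.h.f s ≤ x}, ?_, ?_⟩
    · rintro x y ⟨s, hs, hsx⟩ hxy
      exact ⟨s, hs, hsx.trans hxy⟩
    · ext t
      exact ⟨fun ht => ⟨t, ht, le_rfl⟩, fun ⟨s, hs, hst⟩ => h s t hst hs⟩

section FreeContexts

variable {M : OMonad} {Sg : Pos}

def unfoldBoxHom (M : OMonad) (Sg : Pos) : PHom (M.obj Sg).addBox (M.obj Sg.addBox) :=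
  ⟨Sum.elim (M.map Sg.inBoxHom).f (fun _ => (M.sing Sg.addBox).f Sg.box), by
    rintro x y (h | h)
    · exact (M.map Sg.inBoxHom).mono ‹_›
    · exact le_rfl⟩

def flattenCtx (M : OMonad) (Sg : Pos) (q : (M.obj (M.obj Sg).addBox).car) :
    (M.obj Sg.addBox).car :=
  (M.flat Sg.addBox).f ((M.map (unfoldBoxHom M Sg)).f q)

theorem freeCtxEval_flattenCtx (q : (M.obj (M.obj Sg).addBox).car) (s : (M.obj Sg).car) :
    freeCtxEval M Sg (flattenCtx M Sg q) s = ctxEval M (M.free Sg) q s := by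
  set X := M.free Sg
  set subst := (substHom M X s).comp (singBox M Sg)
  have hsing : subst.comp Sg.inBoxHom = M.sing Sg := PHom.ext fun _ => rfl
  have hunfold : (X.pi.comp (M.map subst)).comp (unfoldBoxHom M Sg) = substHom M X s := by
    refine PHom.addBox_ext (fun u => ?_) ?_
    · change X.pi.f ((M.map subst).f ((M.map Sg.inBoxHom).f u)) = u
      rw [← M.map_comp_apply, hsing]
      exact M.flat_map_sing_apply u
    · change X.pi.f ((M.map subst).f ((M.sing Sg.addBox).f Sg.box)) = s
      rw [M.map_sing_apply, X.pi_sing_apply]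
      rfl
  unfold freeCtxEval flattenCtx ctxEval
  -- `(M.free Sg).A` is `M.obj Sg` only after unfolding `OMonad.free`
  erw [← M.map_comp_apply (singBox M Sg)]
  rw [M.map_flat_apply, X.pi_flat_apply, ← M.map_comp_apply, ← M.map_comp_apply]
  exact congrArg (fun f => X.pi.f ((M.map f).f q)) hunfold

theorem exists_freeCtxEval_of_not_synLe {K : Set (M.obj Sg).car} {s t : (M.obj Sg).car}
    (h : ¬ synLe M (M.free Sg) K s t) :
    ∃ p : (M.obj Sg.addBox).car, freeCtxEval M Sg p s ∈ K ∧ freeCtxEval M Sg p t ∉ K := by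
  simp only [synLe, not_forall, exists_prop] at h
  obtain ⟨q, hs, ht⟩ := h
  exact ⟨flattenCtx M Sg q, by rwa [freeCtxEval_flattenCtx q s],
    by rwa [freeCtxEval_flattenCtx q t]⟩

end FreeContexts

theorem UpClosed.preimage_eq_iUnion_preimage_Ici {α : Type*} {A : Pos} {P : Set A.car}
    (hP : UpClosed A P) (f : α → A.car) : f ⁻¹' P = ⋃ x : P, f ⁻¹' Set.Ici x.1 := by
  ext t
  simp only [Set.mem_preimage, Set.mem_iUnion, Set.mem_Ici, Subtype.exists, exists_prop]
  exact ⟨fun ht => ⟨f t, ht, le_rfl⟩, fun ⟨x, hx, hxt⟩ => hP x _ hx hxt⟩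

theorem exists_fin_iUnion_iInter_eq {α β ι : Type*} {κ : ι → Type*} [Finite ι]
    [∀ i, Finite (κ i)] (f : ∀ i, κ i → β) (D : β → Set α) :
    ∃ (m : ℕ) (n : Fin m → ℕ) (g : ∀ i : Fin m, Fin (n i) → β),
      ⋃ i, ⋂ k, D (g i k) = ⋃ i, ⋂ k, D (f i k) := by
  let e := (Finite.equivFin ι).symm
  refine ⟨Nat.card ι, fun i => Nat.card (κ (e i)),
    fun i k => f (e i) ((Finite.equivFin (κ (e i))).symm k), ?_⟩
  simp only [(Finite.equivFin _).symm.surjective.iInter_comp fun k => D (f _ k)]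
  exact e.surjective.iUnion_comp fun i => ⋂ k, D (f i k)

section Recognition

variable {M : OMonad} {Sg : Pos} {K L : Set (M.obj Sg).car}

theorem UsesStdOrder.recognises_of_forall_synLe (hM : UsesStdOrder M)
    (hKL : ∀ s t, synLe M (M.free Sg) K s t → synLe M (M.free Sg) L s t)
    {X : OAlg M} {φ : OAlgHom (M.free Sg) X} (hK : Recognises φ K) : Recognises φ L := by
  obtain ⟨P, hP, rfl⟩ := hK
  exact (recognises_iff φ L).mpr fun s t hst =>
    forall_synLe_imp_synLe_iff.mp hKL s t (hM.synLe_of_map_le φ hP hst)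

theorem forall_synLe_imp_synLe_of_eq_iUnion_iInter {ι : Type*} {κ : ι → Type*}
    {p : ∀ i, κ i → (M.obj Sg.addBox).car}
    (hL : L = ⋃ i, ⋂ k, {s | freeCtxEval M Sg (p i k) s ∈ K}) :
    ∀ s t, synLe M (M.free Sg) K s t → synLe M (M.free Sg) L s t := by
  refine forall_synLe_imp_synLe_iff.mpr fun s t hst hs => ?_
  rw [hL] at hs ⊢
  obtain ⟨i, hi⟩ := Set.mem_iUnion.mp hs
  exact Set.mem_iUnion.mpr ⟨i, Set.mem_iInter.mpr fun k => hst _ (Set.mem_iInter.mp hi k)⟩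

variable {S : OAlg M} {syn : OAlgHom (M.free Sg) S}

theorem recognises_iff_forall_synLe
    (hker : ∀ s t, syn.h.f s ≤ syn.h.f t ↔ synLe M (M.free Sg) K s t) (L : Set (M.obj Sg).car) :
    Recognises syn L ↔ ∀ s t, synLe M (M.free Sg) K s t → s ∈ L → t ∈ L := by
  simp only [recognises_iff, hker]

theorem preimage_Ici_eq_iInter_freeCtxEval (hsurj : Function.Surjective syn.h.f)
    (hker : ∀ s t, syn.h.f s ≤ syn.h.f t ↔ synLe M (M.free Sg) K s t) (x : S.A.car) :
    ∃ p : {y // ¬ x ≤ y} → (M.obj Sg.addBox).car,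
      syn.h.f ⁻¹' Set.Ici x = ⋂ y, {s | freeCtxEval M Sg (p y) s ∈ K} := by
  choose rep hrep using hsurj
  have hsep (y : {y // ¬ x ≤ y}) : ∃ p : (M.obj Sg.addBox).car,
      freeCtxEval M Sg p (rep x) ∈ K ∧ freeCtxEval M Sg p (rep y) ∉ K := by
    refine exists_freeCtxEval_of_not_synLe fun h => y.2 ?_
    simpa only [hrep] using (hker _ _).mpr h
  choose p hpx hpy using hsep
  refine ⟨p, Set.ext fun t => ⟨fun hxt => ?_, fun ht => ?_⟩⟩
  · have hle : syn.h.f (rep x) ≤ syn.h.f t := by rwa [hrep]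
    exact Set.mem_iInter.mpr fun y => (hker _ _).mp hle _ (hpx y)
  · by_contra hxt
    have hle : syn.h.f t ≤ syn.h.f (rep (syn.h.f t)) := by rw [hrep]
    exact hpy ⟨_, hxt⟩ ((hker _ _).mp hle _ (Set.mem_iInter.mp ht ⟨_, hxt⟩))

theorem exists_eq_iUnion_iInter_freeCtxEval [Finite S.A.car]
    (hsurj : Function.Surjective syn.h.f)
    (hker : ∀ s t, syn.h.f s ≤ syn.h.f t ↔ synLe M (M.free Sg) K s t) (hL : Recognises syn L) :
    ∃ (m : ℕ) (n : Fin m → ℕ) (p : ∀ i : Fin m, Fin (n i) → (M.obj Sg.addBox).car),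
      L = ⋃ i, ⋂ k, {s | freeCtxEval M Sg (p i k) s ∈ K} := by
  obtain ⟨P, hP, rfl⟩ := hL
  choose p hp using preimage_Ici_eq_iInter_freeCtxEval hsurj hker
  obtain ⟨m, n, g, hg⟩ := exists_fin_iUnion_iInter_eq (fun (x : P) => p x)
    (fun q => {s | freeCtxEval M Sg q s ∈ K})
  refine ⟨m, n, g, ?_⟩
  rw [hP.preimage_eq_iUnion_preimage_Ici]
  simp only [hp]
  exact hg.symm

end Recognition

theorem comparing_syntactic_congruences_general (M : OMonad) (hM : Convention M)
    (Sg : Pos)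
    (K L : Set ((M.obj Sg).car))
    (S : OAlg M) (syn : OAlgHom (M.free Sg) S)
    (hsurj : Function.Surjective syn.h.f)
    (hker : ∀ s t : (M.obj Sg).car,
      syn.h.f s ≤ syn.h.f t ↔ synLe M (M.free Sg) K s t)
    (hSfin : Finite S.A.car) :
    ((∀ s t, synLe M (M.free Sg) K s t → synLe M (M.free Sg) L s t) ↔
      Recognises syn L) ∧
    ((∀ s t, synLe M (M.free Sg) K s t → synLe M (M.free Sg) L s t) ↔
      ∀ (X : OAlg M) (φ : OAlgHom (M.free Sg) X),
        Recognises φ K → Recognises φ L) ∧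
    ((∀ s t, synLe M (M.free Sg) K s t → synLe M (M.free Sg) L s t) ↔
      ∃ (m : ℕ) (n : Fin m → ℕ)
        (p : ∀ i : Fin m, Fin (n i) → (M.obj Sg.addBox).car),
        L = ⋃ i, ⋂ k, {s | freeCtxEval M Sg (p i k) s ∈ K}) := by
  obtain ⟨-, -, -, -, hstd⟩ := hM
  have h12 : (∀ s t, synLe M (M.free Sg) K s t → synLe M (M.free Sg) L s t) ↔
      Recognises syn L :=
    forall_synLe_imp_synLe_iff.trans (recognises_iff_forall_synLe hker L).symm
  have hsynK : Recognises syn K :=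
    (recognises_iff_forall_synLe hker K).mpr fun _ _ => mem_of_synLe
  refine ⟨h12, ⟨fun h1 _ _ => hstd.recognises_of_forall_synLe h1,
    fun h3 => h12.mpr (h3 S syn hsynK)⟩, ⟨fun h1 => ?_, ?_⟩⟩
  · exact exists_eq_iUnion_iInter_freeCtxEval hsurj hker (h12.mp h1)
  · rintro ⟨m, n, p, hL⟩
    exact forall_synLe_imp_synLe_of_eq_iUnion_iInter hL

/-- Comparing syntactic congruences.  Let `K` and `L` be languages over the same
alphabet `Σ`, where `K` has a syntactic algebra `S` (given by a surjective syntactic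
morphism `syn` with kernel `≼_K` and finitary index).  The following are equivalent:
(1) `≼_K ⊆ ≼_L`;
(2) the syntactic morphism `syn` of `K` recognises `L`;
(3) every morphism recognising `K` also recognises `L`;
(4) `L` is a finite union of finite intersections of derivatives of `K`. -/
theorem comparing_syntactic_congruences (M : OMonad) (hM : Convention M)
    (Sg : Pos) (hfin : Finite Sg.car) (htriv : TrivOrder Sg)
    (K L : Set ((M.obj Sg).car))
    (S : OAlg M) (syn : OAlgHom (M.free Sg) S)
    (hsurj : Function.Surjective syn.h.f)
    (hker : ∀ s t : (M.obj Sg).car,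
      syn.h.f s ≤ syn.h.f t ↔ synLe M (M.free Sg) K s t)
    (hSfin : Finite S.A.car) :
    ((∀ s t, synLe M (M.free Sg) K s t → synLe M (M.free Sg) L s t) ↔
      Recognises syn L) ∧
    ((∀ s t, synLe M (M.free Sg) K s t → synLe M (M.free Sg) L s t) ↔
      ∀ (X : OAlg M) (φ : OAlgHom (M.free Sg) X),
        Recognises φ K → Recognises φ L) ∧
    ((∀ s t, synLe M (M.free Sg) K s t → synLe M (M.free Sg) L s t) ↔
      ∃ (m : ℕ) (n : Fin m → ℕ)
        (p : ∀ i : Fin m, Fin (n i) → (M.obj Sg.addBox).car),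
        L = ⋃ i, ⋂ k, {s | freeCtxEval M Sg (p i k) s ∈ K}) :=
  comparing_syntactic_congruences_general M hM Sg K L S syn hsurj hker hSfin
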